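/- Let (A,φ) be a PCA over Set. The terminal object ∇1 of Asm(A,φ) is projective (every morphism from ∇1 to the codomain of a regular epimorphism lifts along it) if and only if φ is generated by singletons, i.e., there exists a set C ⊆ A closed under application (if a,b ∈ C and ab is defined then ab ∈ C) such that φ = {U ⊆ A | ∃a ∈ C, a ∈ U}. -/

import Mathlib

/-!
A morphism `∇1 ⟶ Z` is a point of `Z` together with a set in `φ` of realizers of it.

If every `U ∈ φ` contains some `a` with `{a} ∈ φ`, then `∇1` is projective. A regular
epimorphism `e : X ⟶ Y` is surjective, and `e` factors through the assembly on `|Y|` realized by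
the realizers of preimages; the factorization, the identity on points, is tracked by some
`W ∈ φ` turning realizers of `y` into realizers of preimages of `y`. Applying `W` to the
realizers of `g *` yields a set in `φ`; a `d` in it with `{d} ∈ φ` realizes some preimage `x`
of `g *`, and the constant map at `x` lifts `g`.

Conversely, for `U ∈ φ`, the assembly on `U` in which each element realizes itself maps onto
`∇1` by a regular epimorphism (the coequalizer of the two projections out of its square, built
with Church pairs). A lift of `𝟙 ∇1` is a point `a ∈ U` all of whose realizers in some set of
`φ` equal `a`, so `{a} ∈ φ`. Such `a` form a set closed under application that generates `φ`.
-/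

open CategoryTheory

namespace PcaPaper

/-- A partial binary application on `A`. -/
abbrev PApp (A : Type) := A → A → Option A

variable {A B C : Type}

/-- Definedness of the application of inhabited subsets. -/
def SubDef (app : PApp A) (U V : Set A) : Prop :=
  ∀ a ∈ U, ∀ b ∈ V, (app a b).isSome

/-- Application of subsets. -/
def SubApp (app : PApp A) (U V : Set A) : Set A :=
  {c | ∃ a ∈ U, ∃ b ∈ V, app a b = some c}

/-- Terms with `n` variables, built from variables by application. -/
inductive Term (n : ℕ) : Type
  | var : Fin n → Term n
  | op : Term n → Term n → Term n

/-- Evaluation of a term at a vector of elements, as a partial function. -/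
def Term.eval (app : PApp A) : {n : ℕ} → Term n → (Fin n → A) → Option A
  | _, .var i, ρ => some (ρ i)
  | _, .op s t, ρ => (Term.eval app s ρ).bind fun x => (Term.eval app t ρ).bind fun y => app x y

/-- Evaluation of a term at a vector of subsets. -/
def Term.subEval (app : PApp A) : {n : ℕ} → Term n → (Fin n → Set A) → Set A
  | _, .var i, ρ => ρ i
  | _, .op s t, ρ => SubApp app (Term.subEval app s ρ) (Term.subEval app t ρ)

/-- Definedness of the evaluation of a term at a vector of subsets. -/
def Term.subDef (app : PApp A) : {n : ℕ} → Term n → (Fin n → Set A) → Prop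
  | _, .var _, _ => True
  | _, .op s t, ρ => Term.subDef app s ρ ∧ Term.subDef app t ρ ∧
      SubDef app (Term.subEval app s ρ) (Term.subEval app t ρ)

/-- `r · a 0 · … · a (k-1)`, associated to the left. -/
def appVec (app : PApp A) (r : A) : (k : ℕ) → (Fin k → A) → Option A
  | 0, _ => some r
  | k + 1, a => (appVec app r k fun i => a i.castSucc).bind fun s => app s (a (Fin.last k))

/-- `U` realizes `λ x₀ … xₙ. t`. -/
def Realizes (app : PApp A) (U : Set A) {n : ℕ} (t : Term (n + 1)) : Prop :=
  ∀ r ∈ U, ∀ a : Fin (n + 1) → A,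
    (appVec app r n fun i => a i.castSucc).isSome ∧
    ∀ b, Term.eval app t a = some b → appVec app r (n + 1) a = some b

/-- A filter of inhabited subsets on a partial applicative structure. -/
structure IsPcaFilter (app : PApp A) (φ : Set (Set A)) : Prop where
  nonempty : ∀ U ∈ φ, U.Nonempty
  upward : ∀ U ∈ φ, ∀ V : Set A, U ⊆ V → V ∈ φ
  appClosed : ∀ U ∈ φ, ∀ V ∈ φ, SubDef app U V → SubApp app U V ∈ φ

/-- Combinatorial completeness of a set of subsets. -/
def CombComplete (app : PApp A) (G : Set (Set A)) : Prop :=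
  ∀ (n : ℕ) (t : Term (n + 1)), ∃ U ∈ G, Realizes app U t

/-- The least filter containing `G`. -/
def genFilter (app : PApp A) (G : Set (Set A)) : Set (Set A) :=
  ⋂₀ {ψ | IsPcaFilter app ψ ∧ G ⊆ ψ}

/-- A (relative) PCA over the base category `Set`: a nonempty set with a partial
binary application and a combinatorially complete filter of inhabited subsets. -/
structure PCA (A : Type) where
  app : PApp A
  nonemptyCarrier : Nonempty A
  filt : Set (Set A)
  isFilter : IsPcaFilter app filt
  complete : CombComplete app filt

/- ### Helper lemmas -/

lemma isSome_bind_left {α β : Type} {o : Option α} {f : α → Option β}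
    (h : (o.bind f).isSome) : o.isSome := by
  cases o <;> simp_all

lemma appVec_two_pre (app : PApp A) (r u v x : A) :
    (appVec app r 2 fun i => (![u, v, x] : Fin 3 → A) i.castSucc)
      = (app r u).bind fun s => app s v := rfl

lemma appVec_three_cons (app : PApp A) (r u v x : A) :
    appVec app r (2 + 1) ![u, v, x]
      = ((app r u).bind fun s => app s v).bind fun s => app s x := rfl

lemma eval_comp_term (app : PApp A) (u v x : A) :
    Term.eval app (Term.op (.var 1) (.op (.var 0) (.var 2))) ![u, v, x]
      = (app u x).bind fun y => app v y := by
  simp [Term.eval]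

lemma eval_app2_term (app : PApp A) (u v x : A) :
    Term.eval app (Term.op (.op (.var 0) (.var 1)) (.var 2)) ![u, v, x]
      = (app u v).bind fun d => app d x := by
  simp [Term.eval]

lemma filt_nonempty (P : PCA A) : ∃ U, U ∈ P.filt := by
  obtain ⟨U, hU, -⟩ := P.complete 0 (.var 0)
  exact ⟨U, hU⟩

lemma univ_mem_filt (P : PCA A) : (Set.univ : Set A) ∈ P.filt := by
  obtain ⟨U, hU⟩ := filt_nonempty P
  exact P.isFilter.upward U hU _ (Set.subset_univ U)

lemma exists_ireal (P : PCA A) :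
    ∃ U ∈ P.filt, ∀ r ∈ U, ∀ a : A, P.app r a = some a := by
  obtain ⟨U, hU, hreal⟩ := P.complete 0 (.var 0)
  refine ⟨U, hU, fun r hr a => ?_⟩
  have h := (hreal r hr fun _ => a).2 a (by simp [Term.eval])
  simpa [appVec] using h

lemma realizes3_chain (P : PCA A) {T : Set A} {t : Term (2 + 1)}
    (hreal : Realizes P.app T t) {r : A} (hr : r ∈ T) (u v : A) :
    ∃ s w, P.app r u = some s ∧ P.app s v = some w := by
  have h1 : ((P.app r u).bind fun s => P.app s v).isSome := by
    have h := (hreal r hr ![u, v, v]).1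
    rwa [appVec_two_pre] at h
  cases hru : P.app r u with
  | none => rw [hru] at h1; simp at h1
  | some s =>
    rw [hru] at h1
    simp only [Option.bind_some] at h1
    obtain ⟨w, hw⟩ := Option.isSome_iff_exists.mp h1
    exact ⟨s, w, rfl, hw⟩

lemma exists_tracker3 (P : PCA A) (t : Term (2 + 1)) {U V : Set A}
    (hU : U ∈ P.filt) (hV : V ∈ P.filt) :
    ∃ W ∈ P.filt, ∀ w ∈ W, ∃ u ∈ U, ∃ v ∈ V,
      ∀ x c : A, Term.eval P.app t ![u, v, x] = some c → P.app w x = some c := by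
  obtain ⟨T, hT, hreal⟩ := P.complete 2 t
  have hdef1 : SubDef P.app T U := by
    intro r hr u _
    obtain ⟨s, w, hs, -⟩ := realizes3_chain P hreal hr u u
    simp [hs]
  have hTU := P.isFilter.appClosed T hT U hU hdef1
  have hdef2 : SubDef P.app (SubApp P.app T U) V := by
    rintro s ⟨r, hr, u, hu, hru⟩ v _
    obtain ⟨s', w, hs', hw⟩ := realizes3_chain P hreal hr u v
    rw [hru] at hs'
    injection hs' with h
    subst h
    simp [hw]
  refine ⟨SubApp P.app (SubApp P.app T U) V,
    P.isFilter.appClosed _ hTU V hV hdef2, ?_⟩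
  rintro w ⟨s, ⟨r, hr, u, hu, hru⟩, v, hv, hsv⟩
  refine ⟨u, hu, v, hv, fun x c hc => ?_⟩
  have h2 : appVec P.app r (2 + 1) ![u, v, x] = some c := (hreal r hr ![u, v, x]).2 c hc
  rw [appVec_three_cons, hru] at h2
  simp only [Option.bind_some] at h2
  rw [hsv] at h2
  simpa using h2

/- ### Assemblies -/

/-- An assembly over a PCA `(A, φ)`. -/
structure Asm {A : Type} (P : PCA A) : Type 1 where
  carrier : Type
  E : carrier → A → Prop
  total : ∀ x, ∃ a, E x a

/-- `U` tracks the function `f` between (the carriers of) two assemblies. -/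
def Tracks (P : PCA A) {X Y : Asm P} (U : Set A) (f : X.carrier → Y.carrier) : Prop :=
  ∀ x a r, X.E x a → r ∈ U → ∃ b, P.app r a = some b ∧ Y.E (f x) b

/-- The category of assemblies over a PCA. -/
instance asmCategory (P : PCA A) : Category (Asm P) where
  Hom X Y := {f : X.carrier → Y.carrier // ∃ U ∈ P.filt, Tracks P U f}
  id X := ⟨fun x => x, by
    obtain ⟨U, hU, hI⟩ := exists_ireal P
    exact ⟨U, hU, fun x a r hx hr => ⟨a, hI r hr a, hx⟩⟩⟩
  comp {X Y Z} f g := ⟨fun x => g.1 (f.1 x), by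
    obtain ⟨U, hU, hf⟩ := f.2
    obtain ⟨V, hV, hg⟩ := g.2
    obtain ⟨W, hW, hkey⟩ := exists_tracker3 P
      (Term.op (.var 1) (.op (.var 0) (.var 2))) hU hV
    refine ⟨W, hW, fun x a w hx hw => ?_⟩
    obtain ⟨u, hu, v, hv, key⟩ := hkey w hw
    obtain ⟨b, hb, hYb⟩ := hf x a u hx hu
    obtain ⟨c, hc, hZc⟩ := hg (f.1 x) b v hYb hv
    refine ⟨c, key a c ?_, hZc⟩
    rw [eval_comp_term, hb]
    simpa using hc⟩
  id_comp f := Subtype.ext rfl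
  comp_id f := Subtype.ext rfl
  assoc f g h := Subtype.ext rfl

/-- The global-sections-like functor `Γ : Asm(A,φ) ⥤ Set`. -/
def Gam (P : PCA A) : Asm P ⥤ Type where
  obj X := X.carrier
  map f := TypeCat.ofHom f.1
  map_id _ := rfl
  map_comp _ _ := rfl

/-- The constant-object assembly `∇ Y`. -/
def nablaObj (P : PCA A) (Y : Type) : Asm P where
  carrier := Y
  E := fun _ _ => True
  total := fun _ => P.nonemptyCarrier.elim fun a => ⟨a, trivial⟩

/-- The functor `∇ : Set ⥤ Asm(A,φ)`. -/
def Nab (P : PCA A) : Type ⥤ Asm P where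
  obj Y := nablaObj P Y
  map {Y Z} f := ⟨f, by
    obtain ⟨U, hU, hI⟩ := exists_ireal P
    exact ⟨U, hU, fun y a r _ hr => ⟨a, hI r hr a, trivial⟩⟩⟩
  map_id _ := Subtype.ext rfl
  map_comp _ _ := Subtype.ext rfl

/- ### Applicative morphisms -/

/-- The image of a subset under a relation. -/
def relImage (f : A → B → Prop) (V : Set A) : Set B :=
  {b | ∃ a ∈ V, f a b}

/-- `U` tracks the relation `f` as an applicative (pre)morphism. -/
def Tracks₂ (appA : PApp A) (appB : PApp B) (U : Set B) (f : A → B → Prop) : Prop :=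
  ∀ a a' c, appA a a' = some c → ∀ b b', f a b → f a' b' → ∀ r ∈ U,
    ∃ d e, appB r b = some d ∧ appB d b' = some e ∧ f c e

/-- `f ⊆ A × B` is an applicative morphism `(A,φ) → (B,ψ)`. -/
structure IsAppMor (appA : PApp A) (φ : Set (Set A)) (appB : PApp B) (ψ : Set (Set B))
    (f : A → B → Prop) : Prop where
  total : ∀ a, ∃ b, f a b
  tracked : ∃ U ∈ ψ, Tracks₂ appA appB U f
  image : ∀ V ∈ φ, relImage f V ∈ ψ

/-- The preorder `f ≤ f'` on relations `A × B`, relative to `(B,ψ)`. -/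
def RelLe (appB : PApp B) (ψ : Set (Set B)) (f f' : A → B → Prop) : Prop :=
  ∃ U ∈ ψ, ∀ a b, f a b → ∀ r ∈ U, ∃ c, appB r b = some c ∧ f' a c

/-- Relational composition: `(RelComp g f) a c ↔ ∃ b, f a b ∧ g b c`. -/
def RelComp (g : B → C → Prop) (f : A → B → Prop) : A → C → Prop :=
  fun a c => ∃ b, f a b ∧ g b c

/-- The diagonal (identity) relation `δ_A`. -/
def relId (A : Type) : A → A → Prop := fun a b => a = b

/- ### The functor Asm(f) induced by an applicative morphism -/

/-- The action of an applicative morphism on an assembly. -/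
def asmObj (P : PCA A) (Q : PCA B) (f : A → B → Prop) (htot : ∀ a, ∃ b, f a b)
    (X : Asm P) : Asm Q where
  carrier := X.carrier
  E := fun x b => ∃ a, X.E x a ∧ f a b
  total := fun x => by
    obtain ⟨a, ha⟩ := X.total x
    obtain ⟨b, hb⟩ := htot a
    exact ⟨b, a, ha, hb⟩

lemma tracks_asmMap {P : PCA A} {Q : PCA B} {f : A → B → Prop}
    (hf : IsAppMor P.app P.filt Q.app Q.filt f) {X Y : Asm P}
    (g : X.carrier → Y.carrier) (hg : ∃ U ∈ P.filt, Tracks P U g) :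
    ∃ W ∈ Q.filt,
      Tracks Q (X := asmObj P Q f hf.total X) (Y := asmObj P Q f hf.total Y) W g := by
  obtain ⟨U, hU, hgU⟩ := hg
  obtain ⟨T, hT, hfT⟩ := hf.tracked
  have hfU : relImage f U ∈ Q.filt := hf.image U hU
  obtain ⟨W, hW, hkey⟩ := exists_tracker3 Q
    (Term.op (.op (.var 0) (.var 1)) (.var 2)) hT hfU
  refine ⟨W, hW, ?_⟩
  rintro x b w ⟨a, hxa, hab⟩ hw
  obtain ⟨v, hv, y, hy, key⟩ := hkey w hw
  obtain ⟨u, hu, huy⟩ := hy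
  obtain ⟨a', ha', hEa'⟩ := hgU x a u hxa hu
  obtain ⟨d, e, hd, he, hfe⟩ := hfT u a a' ha' y b huy hab v hv
  refine ⟨e, key b e ?_, a', hEa', hfe⟩
  rw [eval_app2_term, hd]
  simpa using he

/-- The functor `Asm(f) : Asm(A,φ) ⥤ Asm(B,ψ)` induced by an applicative morphism. -/
def asmFunctor {P : PCA A} {Q : PCA B} {f : A → B → Prop}
    (hf : IsAppMor P.app P.filt Q.app Q.filt f) : Asm P ⥤ Asm Q where
  obj X := asmObj P Q f hf.total X
  map {X Y} g := ⟨g.1, tracks_asmMap hf g.1 g.2⟩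
  map_id _ := Subtype.ext rfl
  map_comp _ _ := Subtype.ext rfl
/- ### Products of PASs -/

/-- Coordinatewise partial application on `A × B`. -/
def prodApp (appA : PApp A) (appB : PApp B) : PApp (A × B) := fun p q =>
  (appA p.1 q.1).bind fun x => (appB p.2 q.2).bind fun y => some (x, y)

/-- The set `φ × ψ` of rectangles `U ×ˢ V` with `U ∈ φ` and `V ∈ ψ`. -/
def prodFiltSet (φ : Set (Set A)) (ψ : Set (Set B)) : Set (Set (A × B)) :=
  {W | ∃ U ∈ φ, ∃ V ∈ ψ, W = U ×ˢ V}

/-- The filter `⟨φ × ψ⟩` of the pseudocoproduct of two PCAs. -/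
def prodFilt (P : PCA A) (Q : PCA B) : Set (Set (A × B)) :=
  genFilter (prodApp P.app Q.app) (prodFiltSet P.filt Q.filt)

/- ### Quasi-surjectivity and computational density -/

/-- A quasi-surjective applicative morphism. -/
def QuasiSurjective (P : PCA A) (Q : PCA B) (f : A → B → Prop) : Prop :=
  ∃ N ∈ Q.filt, ∀ U ∈ Q.filt, ∃ V ∈ P.filt,
    ∀ n ∈ N, ∀ b ∈ relImage f V, ∃ c, Q.app n b = some c ∧ c ∈ U

/-- A computationally dense applicative morphism. -/
def CompDense (P : PCA A) (Q : PCA B) (f : A → B → Prop) : Prop :=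
  ∃ M ∈ Q.filt, ∀ U ∈ Q.filt, ∃ V ∈ P.filt,
    (∀ r ∈ V, ∀ a : A, (P.app r a).isSome) ∧
    (∀ r ∈ V, ∀ a a', P.app r a = some a' →
      (∀ u ∈ U, ∀ b, f a b → (Q.app u b).isSome) →
      ∀ m ∈ M, ∀ b', f a' b' →
        ∃ c, Q.app m b' = some c ∧ ∃ u ∈ U, ∃ b'', f a b'' ∧ Q.app u b'' = some c)

/- ### Slicing: fiberwise filters over an assembly -/

/-- Fiberwise definedness of the application of two subsets of `I × A`. -/
def fibSubDef (app : PApp A) {I : Type} (U V : Set (I × A)) : Prop :=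
  ∀ i r s, (i, r) ∈ U → (i, s) ∈ V → (app r s).isSome

/-- Fiberwise application of two subsets of `I × A`. -/
def fibSubApp (app : PApp A) {I : Type} (U V : Set (I × A)) : Set (I × A) :=
  {p | ∃ r s, (p.1, r) ∈ U ∧ (p.1, s) ∈ V ∧ app r s = some p.2}

/-- A fiberwise filter over `I`. -/
structure IsFibFilter (app : PApp A) (I : Type) (Ψ : Set (Set (I × A))) : Prop where
  inhab : ∀ U ∈ Ψ, ∀ i : I, ∃ a, (i, a) ∈ U
  upward : ∀ U ∈ Ψ, ∀ V : Set (I × A), U ⊆ V → V ∈ Ψ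
  appClosed : ∀ U ∈ Ψ, ∀ V ∈ Ψ, fibSubDef app U V → fibSubApp app U V ∈ Ψ

/-- The filter `φ_I` of the slice PCA over an assembly `I`: the least fiberwise filter
containing `E_I` and all sets `|I| × V` for `V ∈ φ`. -/
def sliceFilt (P : PCA A) (I : Asm P) : Set (Set (I.carrier × A)) :=
  ⋂₀ {Ψ | IsFibFilter P.app I.carrier Ψ ∧ {p : I.carrier × A | I.E p.1 p.2} ∈ Ψ ∧
      ∀ V ∈ P.filt, {p : I.carrier × A | p.2 ∈ V} ∈ Ψ}

lemma sliceFilt_upward {P : PCA A} {I : Asm P} {U V : Set (I.carrier × A)}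
    (hU : U ∈ sliceFilt P I) (hUV : U ⊆ V) : V ∈ sliceFilt P I := by
  rw [sliceFilt, Set.mem_sInter] at hU ⊢
  intro Ψ hΨ
  exact hΨ.1.upward U (hU Ψ hΨ) V hUV

lemma sliceFilt_appClosed {P : PCA A} {I : Asm P} {U V : Set (I.carrier × A)}
    (hU : U ∈ sliceFilt P I) (hV : V ∈ sliceFilt P I) (hdef : fibSubDef P.app U V) :
    fibSubApp P.app U V ∈ sliceFilt P I := by
  rw [sliceFilt, Set.mem_sInter] at hU hV ⊢
  intro Ψ hΨ
  exact hΨ.1.appClosed U (hU Ψ hΨ) V (hV Ψ hΨ) hdef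

lemma base_mem_sliceFilt {P : PCA A} {I : Asm P} {V : Set A} (hV : V ∈ P.filt) :
    {p : I.carrier × A | p.2 ∈ V} ∈ sliceFilt P I := by
  rw [sliceFilt, Set.mem_sInter]
  intro Ψ hΨ
  exact hΨ.2.2 V hV

lemma EI_mem_sliceFilt (P : PCA A) (I : Asm P) :
    {p : I.carrier × A | I.E p.1 p.2} ∈ sliceFilt P I := by
  rw [sliceFilt, Set.mem_sInter]
  intro Ψ hΨ
  exact hΨ.2.1

lemma exists_fib_tracker3 (P : PCA A) (I : Asm P) (t : Term (2 + 1))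
    {U V : Set (I.carrier × A)} (hU : U ∈ sliceFilt P I) (hV : V ∈ sliceFilt P I) :
    ∃ W ∈ sliceFilt P I, ∀ i w, (i, w) ∈ W → ∃ u v, (i, u) ∈ U ∧ (i, v) ∈ V ∧
      ∀ x c : A, Term.eval P.app t ![u, v, x] = some c → P.app w x = some c := by
  obtain ⟨T, hT, hreal⟩ := P.complete 2 t
  have hT' : {p : I.carrier × A | p.2 ∈ T} ∈ sliceFilt P I := base_mem_sliceFilt hT
  have hdef1 : fibSubDef P.app {p : I.carrier × A | p.2 ∈ T} U := by
    intro i r s hr _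
    obtain ⟨s', w', h1, -⟩ := realizes3_chain P hreal hr s s
    simp [h1]
  have h1mem := sliceFilt_appClosed hT' hU hdef1
  have hdef2 : fibSubDef P.app (fibSubApp P.app {p : I.carrier × A | p.2 ∈ T} U) V := by
    rintro i s v ⟨r, u, hr, hu, hru⟩ _
    obtain ⟨s', w', hs', hw'⟩ := realizes3_chain P hreal hr u v
    rw [hru] at hs'
    injection hs' with h
    subst h
    simp [hw']
  refine ⟨_, sliceFilt_appClosed h1mem hV hdef2, ?_⟩
  rintro i w ⟨s, v, ⟨r, u, hr, hu, hru⟩, hv, hsv⟩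
  refine ⟨u, v, hu, hv, fun x c hc => ?_⟩
  have h2 : appVec P.app r (2 + 1) ![u, v, x] = some c := (hreal r hr ![u, v, x]).2 c hc
  rw [appVec_three_cons, hru] at h2
  simp only [Option.bind_some] at h2
  rw [hsv] at h2
  simpa using h2

/- ### The category of assemblies over the slice PCA `(A,φ)/I` -/

/-- Assemblies over the slice PCA `(A,φ)/I`. -/
structure SliceAsm (P : PCA A) (I : Asm P) : Type 1 where
  carrier : Type
  k : carrier → I.carrier
  E : carrier → A → Prop
  total : ∀ x, ∃ a, E x a

/-- Fiberwise tracking for morphisms of assemblies over `(A,φ)/I`. -/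
def SliceTracks (P : PCA A) (I : Asm P) {X Y : SliceAsm P I} (U : Set (I.carrier × A))
    (f : X.carrier → Y.carrier) : Prop :=
  ∀ x a r, X.E x a → (X.k x, r) ∈ U → ∃ b, P.app r a = some b ∧ Y.E (f x) b

instance sliceAsmCategory (P : PCA A) (I : Asm P) : Category (SliceAsm P I) where
  Hom X Y := {f : X.carrier → Y.carrier //
    (∀ x, Y.k (f x) = X.k x) ∧ ∃ U ∈ sliceFilt P I, SliceTracks P I U f}
  id X := ⟨fun x => x, fun _ => rfl, by
    obtain ⟨U, hU, hI⟩ := exists_ireal P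
    exact ⟨{p | p.2 ∈ U}, base_mem_sliceFilt hU,
      fun x a r hx hr => ⟨a, hI r hr a, hx⟩⟩⟩
  comp {X Y Z} f g := ⟨fun x => g.1 (f.1 x), fun x => (g.2.1 (f.1 x)).trans (f.2.1 x), by
    obtain ⟨U, hU, hf⟩ := f.2.2
    obtain ⟨V, hV, hg⟩ := g.2.2
    obtain ⟨W, hW, hkey⟩ := exists_fib_tracker3 P I
      (Term.op (.var 1) (.op (.var 0) (.var 2))) hU hV
    refine ⟨W, hW, fun x a w hx hw => ?_⟩
    obtain ⟨u, v, hu, hv, key⟩ := hkey (X.k x) w hw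
    obtain ⟨b, hb, hYb⟩ := hf x a u hx hu
    have hv' : (Y.k (f.1 x), v) ∈ V := by rw [f.2.1 x]; exact hv
    obtain ⟨c, hc, hZc⟩ := hg (f.1 x) b v hYb hv'
    refine ⟨c, key a c ?_, hZc⟩
    rw [eval_comp_term, hb]
    simpa using hc⟩
  id_comp f := Subtype.ext rfl
  comp_id f := Subtype.ext rfl
  assoc f g h := Subtype.ext rfl

/- ### Families of assemblies (products of PCAs) -/

/-- The category of families of assemblies over a family of PCAs, with uniformly
tracked families of morphisms; this is the category of assemblies over the product
PCA of the family, taken over the product of the base categories. -/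
structure FamAsm {I : Type} {A : I → Type} (P : ∀ i, PCA (A i)) : Type 1 where
  obj : ∀ i, Asm (P i)

instance famAsmCategory {I : Type} {A : I → Type} (P : ∀ i, PCA (A i)) :
    Category (FamAsm P) where
  Hom X Y := {f : ∀ i, (X.obj i).carrier → (Y.obj i).carrier //
    ∃ U : ∀ i, Set (A i), (∀ i, U i ∈ (P i).filt) ∧ ∀ i, Tracks (P i) (U i) (f i)}
  id X := ⟨fun i x => x, by
    choose U hU using fun i => exists_ireal (P i)
    exact ⟨U, fun i => (hU i).1, fun i x a r hx hr => ⟨a, (hU i).2 r hr a, hx⟩⟩⟩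
  comp {X Y Z} f g := ⟨fun i x => g.1 i (f.1 i x), by
    obtain ⟨U, hU, hf⟩ := f.2
    obtain ⟨V, hV, hg⟩ := g.2
    choose W hW using fun i => exists_tracker3 (P i)
      (Term.op (.var 1) (.op (.var 0) (.var 2))) (hU i) (hV i)
    refine ⟨W, fun i => (hW i).1, fun i x a w hx hw => ?_⟩
    obtain ⟨u, hu, v, hv, key⟩ := (hW i).2 w hw
    obtain ⟨b, hb, hYb⟩ := hf i x a u hx hu
    obtain ⟨c, hc, hZc⟩ := hg i (f.1 i x) b v hYb hv
    refine ⟨c, key a c ?_, hZc⟩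
    rw [eval_comp_term, hb]
    simpa using hc⟩
  id_comp f := Subtype.ext rfl
  comp_id f := Subtype.ext rfl
  assoc f g h := Subtype.ext rfl

section Combinators

variable {app : PApp A} {U : Set A} {r : A}

lemma Realizes.exists_app₂ {t : Term (1 + 1)} (h : Realizes app U t) (hr : r ∈ U)
    (a : A) :
    ∃ s, app r a = some s ∧ ∀ b c, t.eval app ![a, b] = some c → app s b = some c := by
  obtain ⟨s, hs⟩ := Option.isSome_iff_exists.mp (h r hr ![a, a]).1
  refine ⟨s, hs, fun b c hc => ?_⟩
  have hrab : (app r a).bind (fun s => app s b) = some c := (h r hr ![a, b]).2 c hc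
  rwa [show app r a = some s from hs, Option.bind_some] at hrab

lemma Realizes.exists_app₃ {t : Term (2 + 1)} (h : Realizes app U t) (hr : r ∈ U)
    (a b : A) :
    ∃ s w, app r a = some s ∧ app s b = some w ∧
      ∀ x c, t.eval app ![a, b, x] = some c → app w x = some c := by
  have hdef : ((app r a).bind fun s => app s b).isSome := (h r hr ![a, b, a]).1
  obtain ⟨s, hs⟩ := Option.isSome_iff_exists.mp (isSome_bind_left hdef)
  rw [hs, Option.bind_some] at hdef
  obtain ⟨w, hw⟩ := Option.isSome_iff_exists.mp hdef
  refine ⟨s, w, hs, hw, fun x c hc => ?_⟩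
  have hrabx : (((app r a).bind fun s => app s b).bind fun w => app w x) = some c :=
    (h r hr ![a, b, x]).2 c hc
  rwa [hs, Option.bind_some, hw, Option.bind_some] at hrabx

end Combinators

lemma exists_mem_filt_forall_of_app (P : PCA A) {V R : Set A} (hV : V ∈ P.filt)
    (hR : R ∈ P.filt) {Q : A → Prop}
    (h : ∀ v ∈ V, ∀ b ∈ R, ∃ c, P.app v b = some c ∧ Q c) :
    ∃ S ∈ P.filt, ∀ c ∈ S, Q c := by
  refine ⟨SubApp P.app V R, P.isFilter.appClosed V hV R hR fun v hv b hb => ?_, ?_⟩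
  · obtain ⟨c, hc, -⟩ := h v hv b hb
    simp [hc]
  · rintro c ⟨v, hv, b, hb, hvb⟩
    obtain ⟨c', hc', hQ⟩ := h v hv b hb
    rw [hvb, Option.some.injEq] at hc'
    rwa [hc']

lemma exists_selector_combinator (P : PCA A) (i : Fin 2) :
    ∃ K ∈ P.filt, ∀ k ∈ K, ∀ a, ∃ s, P.app k a = some s ∧
      ∀ b, P.app s b = some (![a, b] i) := by
  obtain ⟨K, hK, hreal⟩ := P.complete 1 (.var i)
  refine ⟨K, hK, fun k hk a => ?_⟩
  obtain ⟨s, hs, hsb⟩ := hreal.exists_app₂ hk a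
  exact ⟨s, hs, fun b => hsb b _ (by rw [Term.eval])⟩

def IsPairing (app : PApp A) (Fst Snd : Set A) : Prop :=
  ∀ a b : A, ∃ w, (∀ f ∈ Fst, app f w = some a) ∧ (∀ f ∈ Snd, app f w = some b)

lemma exists_isPairing (P : PCA A) :
    ∃ Fst ∈ P.filt, ∃ Snd ∈ P.filt, IsPairing P.app Fst Snd := by
  -- Church pairs: `w = p a b` with `p` realizing `λ a b z. z a b`, projected by `t k` with
  -- `t` realizing `λ k w. w k` and `k` a selector.
  obtain ⟨Pr, hPr, hPrR⟩ := P.complete 2 (.op (.op (.var 2) (.var 0)) (.var 1))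
  obtain ⟨p, hp⟩ := P.isFilter.nonempty Pr hPr
  obtain ⟨T, hT, hTR⟩ := P.complete 1 (.op (.var 1) (.var 0))
  have proj : ∀ i : Fin 2, ∃ F ∈ P.filt, ∀ f ∈ F, ∀ a b s w, P.app p a = some s →
      P.app s b = some w → P.app f w = some (![a, b] i) := by
    intro i
    obtain ⟨K, hK, hKsel⟩ := exists_selector_combinator P i
    refine exists_mem_filt_forall_of_app P hT hK fun t ht k hk => ?_
    obtain ⟨f, htk, hf⟩ := hTR.exists_app₂ ht k
    refine ⟨f, htk, fun a b s w hs hw => hf w _ ?_⟩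
    obtain ⟨s', w', hs', hw', hpair⟩ := hPrR.exists_app₃ hp a b
    obtain rfl : s' = s := Option.some.inj (hs'.symm.trans hs)
    obtain rfl : w' = w := Option.some.inj (hw'.symm.trans hw)
    obtain ⟨c, hkc, hcb⟩ := hKsel k hk a
    simpa [Term.eval] using hpair k _ (by simp [Term.eval, hkc, hcb])
  obtain ⟨Fst, hFst, hFstp⟩ := proj 0
  obtain ⟨Snd, hSnd, hSndp⟩ := proj 1
  refine ⟨Fst, hFst, Snd, hSnd, fun a b => ?_⟩
  obtain ⟨s, w, hs, hw, -⟩ := hPrR.exists_app₃ hp a b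
  exact ⟨w, fun f hf => hFstp f hf a b s w hs hw, fun f hf => hSndp f hf a b s w hs hw⟩

def IsRegularProjective {𝒞 : Type*} [Category 𝒞] (Q : 𝒞) : Prop :=
  ∀ (X Y : 𝒞) (e : X ⟶ Y), Nonempty (RegularEpi e) →
    ∀ g : Q ⟶ Y, ∃ h : Q ⟶ X, h ≫ e = g

section Assemblies

variable {P : PCA A}

@[ext]
lemma Asm.hom_ext {X Y : Asm P} {f g : X ⟶ Y} (h : ∀ x, f.1 x = g.1 x) : f = g :=
  Subtype.ext (funext h)

def homOfRealizersSubset {X Y : Asm P} (f : X.carrier → Y.carrier)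
    (hf : ∀ x a, X.E x a → Y.E (f x) a) : X ⟶ Y :=
  ⟨f, by
    obtain ⟨U, hU, hI⟩ := exists_ireal P
    exact ⟨U, hU, fun x a r hx hr => ⟨a, hI r hr a, hf x a hx⟩⟩⟩

def toNabla (X : Asm P) {Z : Type} (f : X.carrier → Z) : X ⟶ nablaObj P Z :=
  homOfRealizersSubset (Y := nablaObj P Z) f fun _ _ _ => trivial

def pointHom {Z : Asm P} (z : Z.carrier) (hz : ∃ R ∈ P.filt, ∀ d ∈ R, Z.E z d) :
    nablaObj P PUnit ⟶ Z :=
  ⟨fun _ => z, by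
    obtain ⟨R, hR, hRz⟩ := hz
    obtain ⟨K, hK, hKc⟩ := exists_selector_combinator P 0
    obtain ⟨S, hS, hSc⟩ := exists_mem_filt_forall_of_app P hK hR
      (Q := fun c => ∃ d, Z.E z d ∧ ∀ a, P.app c a = some d) fun k hk d hd => by
        obtain ⟨s, hs, hsa⟩ := hKc k hk d
        exact ⟨s, hs, d, hRz d hd, hsa⟩
    refine ⟨S, hS, fun _ a c _ hc => ?_⟩
    obtain ⟨d, hd, hca⟩ := hSc c hc
    exact ⟨d, hca a, hd⟩⟩

lemma exists_filt_realizers_of_hom {Z : Asm P} (h : nablaObj P PUnit ⟶ Z) :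
    ∃ R ∈ P.filt, ∀ d ∈ R, Z.E (h.1 PUnit.unit) d := by
  obtain ⟨T, hT, hTh⟩ := h.2
  exact exists_mem_filt_forall_of_app P hT (univ_mem_filt P) fun r hr a _ =>
    hTh PUnit.unit a r trivial hr

lemma surjective_of_epi {X Y : Asm P} (e : X ⟶ Y) [Epi e] : Function.Surjective e.1 := by
  have h : toNabla Y (fun y => ∃ x, e.1 x = y) = toNabla Y (fun _ => True) :=
    (cancel_epi e).mp (Asm.hom_ext fun x => eq_true ⟨x, rfl⟩)
  exact fun y => of_eq_true (congrArg (fun f => f.1 y) h)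

def imageAsm {X Y : Asm P} (e : X ⟶ Y) (he : Function.Surjective e.1) : Asm P where
  carrier := Y.carrier
  E y b := ∃ x, e.1 x = y ∧ X.E x b
  total y := by
    obtain ⟨x, rfl⟩ := he y
    obtain ⟨b, hb⟩ := X.total x
    exact ⟨b, x, rfl, hb⟩

lemma exists_realizer_lift_of_regularEpi {X Y : Asm P} {e : X ⟶ Y} (he : RegularEpi e) :
    ∃ W ∈ P.filt, ∀ y b r, Y.E y b → r ∈ W →
      ∃ c, P.app r b = some c ∧ ∃ x, e.1 x = y ∧ X.E x c := by
  have := he.epi e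
  have hsurj := surjective_of_epi e
  let f : X ⟶ imageAsm e hsurj := homOfRealizersSubset e.1 fun x _ hx => ⟨x, rfl, hx⟩
  let m : Y ⟶ imageAsm e hsurj :=
    Limits.Cofork.IsColimit.desc he.isColimit f (Asm.hom_ext fun z => congrArg (·.1 z) he.w)
  have hm : ∀ y, m.1 y = y := by
    intro y
    obtain ⟨x, rfl⟩ := hsurj y
    exact congrArg (·.1 x) (Limits.Cofork.IsColimit.π_desc' he.isColimit f _)
  obtain ⟨W, hW, hWm⟩ := m.2
  refine ⟨W, hW, fun y b r hb hr => ?_⟩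
  obtain ⟨c, hc, x, hx, hxc⟩ := hWm y b r hb hr
  exact ⟨c, hc, x, hx.trans (hm y), hxc⟩

end Assemblies

section ToNablaUnit

variable (P : PCA A)

def subsetAsm (U : Set A) : Asm P where
  carrier := U
  E x b := b = x
  total x := ⟨x, rfl⟩

variable {P} {Fst Snd : Set A}

def prodAsm (X Y : Asm P) (hpair : IsPairing P.app Fst Snd) : Asm P where
  carrier := X.carrier × Y.carrier
  E z w := ∃ a b, X.E z.1 a ∧ Y.E z.2 b ∧
    (∀ f ∈ Fst, P.app f w = some a) ∧ (∀ f ∈ Snd, P.app f w = some b)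
  total z := by
    obtain ⟨a, ha⟩ := X.total z.1
    obtain ⟨b, hb⟩ := Y.total z.2
    obtain ⟨w, hwa, hwb⟩ := hpair a b
    exact ⟨w, a, b, ha, hb, hwa, hwb⟩

def prodFst (X Y : Asm P) (hpair : IsPairing P.app Fst Snd) (hFst : Fst ∈ P.filt) :
    prodAsm X Y hpair ⟶ X :=
  ⟨Prod.fst, Fst, hFst, fun _ _ f ⟨a, _, ha, _, hwa, _⟩ hf => ⟨a, hwa f hf, ha⟩⟩

def prodSnd (X Y : Asm P) (hpair : IsPairing P.app Fst Snd) (hSnd : Snd ∈ P.filt) :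
    prodAsm X Y hpair ⟶ Y :=
  ⟨Prod.snd, Snd, hSnd, fun _ _ f ⟨_, b, _, hb, _, hwb⟩ hf => ⟨b, hwb f hf, hb⟩⟩

lemma nonempty_regularEpi_toNabla_unit {U : Set A} (hU : U ∈ P.filt) :
    Nonempty (RegularEpi (toNabla (subsetAsm P U) fun _ => PUnit.unit)) := by
  obtain ⟨Fst, hFst, Snd, hSnd, hpair⟩ := exists_isPairing P
  obtain ⟨u₀, hu₀⟩ := P.isFilter.nonempty U hU
  let X := subsetAsm P U
  let l := prodFst X X hpair hFst
  let r := prodSnd X X hpair hSnd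
  have hconst : ∀ (s : Limits.Cofork l r) (x y : X.carrier), s.π.1 x = s.π.1 y :=
    fun s x y => congrArg (·.1 (x, y)) s.condition
  -- every `u ∈ U` realizes `s.π u = s.π u₀`
  have hrealizers : ∀ s : Limits.Cofork l r,
      ∃ R ∈ P.filt, ∀ d ∈ R, s.pt.E (s.π.1 ⟨u₀, hu₀⟩) d := by
    intro s
    obtain ⟨V, hV, hVs⟩ := s.π.2
    refine exists_mem_filt_forall_of_app P hV hU fun v hv u hu => ?_
    rw [hconst s ⟨u₀, hu₀⟩ ⟨u, hu⟩]
    exact hVs ⟨u, hu⟩ u v rfl hv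
  exact ⟨⟨prodAsm X X hpair, l, r, rfl, Limits.Cofork.IsColimit.mk _
    (fun s => pointHom _ (hrealizers s))
    (fun s => Asm.hom_ext fun x => hconst s ⟨u₀, hu₀⟩ x)
    (fun s m hm => Asm.hom_ext fun _ => congrArg (·.1 ⟨u₀, hu₀⟩) hm)⟩⟩

end ToNablaUnit

theorem IsPcaFilter.exists_appClosed_generating_iff {app : PApp A} {φ : Set (Set A)}
    (hφ : IsPcaFilter app φ) :
    (∃ C : Set A, (∀ a ∈ C, ∀ b ∈ C, ∀ c, app a b = some c → c ∈ C) ∧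
        φ = {U : Set A | ∃ a ∈ C, a ∈ U}) ↔
      ∀ U ∈ φ, ∃ a ∈ U, {a} ∈ φ := by
  constructor
  · rintro ⟨C, -, rfl⟩ U ⟨a, haC, haU⟩
    exact ⟨a, haU, a, haC, rfl⟩
  · intro hsing
    refine ⟨{a | ({a} : Set A) ∈ φ}, fun a ha b hb c hc => ?_, Set.ext fun U =>
      ⟨fun hU => (hsing U hU).imp fun _ => And.symm, ?_⟩⟩
    · refine hφ.upward _ (hφ.appClosed {a} ha {b} hb ?_) _ ?_
      · rintro _ rfl _ rfl
        simp [hc]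
      · rintro _ ⟨_, rfl, _, rfl, hab⟩
        exact Option.some.inj (hab.symm.trans hc)
    · rintro ⟨a, ha, haU⟩
      exact hφ.upward {a} ha U (Set.singleton_subset_iff.mpr haU)

theorem isRegularProjective_nablaUnit_iff (P : PCA A) :
    IsRegularProjective (nablaObj P PUnit) ↔ ∀ U ∈ P.filt, ∃ a ∈ U, {a} ∈ P.filt := by
  constructor
  · intro hproj U hU
    obtain ⟨h, -⟩ := hproj _ _ _ (nonempty_regularEpi_toNabla_unit hU) (𝟙 _)
    obtain ⟨R, hR, hRa⟩ := exists_filt_realizers_of_hom h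
    exact ⟨(h.1 PUnit.unit).1, (h.1 PUnit.unit).2, P.isFilter.upward R hR _ hRa⟩
  · rintro hsing X Y e ⟨he⟩ g
    obtain ⟨W, hW, hWe⟩ := exists_realizer_lift_of_regularEpi he
    obtain ⟨R, hR, hRg⟩ := exists_filt_realizers_of_hom g
    obtain ⟨S, hS, hSx⟩ := exists_mem_filt_forall_of_app P hW hR
      (Q := fun c => ∃ x, e.1 x = g.1 PUnit.unit ∧ X.E x c) fun r hr b hb =>
        hWe _ b r (hRg b hb) hr
    obtain ⟨d, hdS, hd⟩ := hsing S hS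
    obtain ⟨x, hx, hxd⟩ := hSx d hdS
    exact ⟨pointHom x ⟨{d}, hd, fun _ hd' => hd' ▸ hxd⟩, Asm.hom_ext fun _ => hx⟩

/-- The terminal object `∇1` of `Asm(A,φ)` is projective (w.r.t. regular
epimorphisms) iff the filter `φ` is generated by a set `C` of elements of `A` that is
closed under application. -/
theorem statement12 (A : Type) (P : PCA A) :
    (∀ (X Y : Asm P) (e : X ⟶ Y), Nonempty (RegularEpi e) →
        ∀ g : nablaObj P PUnit ⟶ Y, ∃ h : nablaObj P PUnit ⟶ X, h ≫ e = g) ↔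
      ∃ C : Set A,
        (∀ a ∈ C, ∀ b ∈ C, ∀ c, P.app a b = some c → c ∈ C) ∧
        P.filt = {U : Set A | ∃ a ∈ C, a ∈ U} :=
  (isRegularProjective_nablaUnit_iff P).trans P.isFilter.exists_appClosed_generating_iff.symm

end PcaPaper
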